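/- Let E be a nonempty finite type with a probability measure μ, let n ≥ 2 be an integer, and let P be the product probability measure on Ω = (ZMod (2n) → E), so the coordinates ω(j), j ∈ ZMod(2n), are i.i.d. with law μ. Given f, g : E × E → ℝ, define for each i ∈ ZMod n the random variables U_i(ω) = f(ω(2i−1), ω(2i)) and V_i(ω) = g(ω(2i), ω(2i+1)), where 2i, 2i±1 are computed in ZMod(2n). Then the variance of the cyclic supercell sum satisfies Var(Σ_{i ∈ ZMod n} (U_i + V_i)) = n·(σ_uu + σ_vv + 2·σ_uv), where σ_uu = E[(U_0 − Ū)²], σ_vv = E[(V_0 − V̄)²], σ_uv = E[(U_0 − Ū)·(V_0 + V_{−1} − 2V̄)], with Ū = E[U_0] and V̄ = E[V_0]. -/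

import Mathlib

/-!
The shift `ω ↦ ω (· + 2k)` of the lattice preserves the product measure and sends the bonds
`U i = f (ω (2i-1), ω (2i))` and `V i = g (ω (2i), ω (2i+1))` to `U (i+k)` and `V (i+k)`. Hence for
`X, Y ∈ {U, V}` the double sum `∑ i, ∑ j, cov(X i, Y j)` is `n ∑ j, cov(X 0, Y j)`. Bonds sharing no
site are independent, so only `cov(U 0, U 0)`, `cov(V 0, V 0)` and the two bonds `V 0`, `V (-1)`
touching `U 0` survive; these are distinct because `n ≥ 2`.
-/

open MeasureTheory ProbabilityTheory

section Covariance

variable {Ω Ω' : Type*} [MeasurableSpace Ω] [MeasurableSpace Ω'] {P : Measure Ω}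

lemma MeasureTheory.MeasurePreserving.covariance_comp {P' : Measure Ω'} {T : Ω' → Ω}
    (hT : MeasurePreserving T P' P) {X Y : Ω → ℝ}
    (hX : AEStronglyMeasurable X P) (hY : AEStronglyMeasurable Y P) :
    cov[X ∘ T, Y ∘ T; P'] = cov[X, Y; P] := by
  rw [← covariance_map (hT.map_eq ▸ hX) (hT.map_eq ▸ hY) hT.aemeasurable, hT.map_eq]

lemma variance_sum_add [IsFiniteMeasure P] {ι : Type*} [Fintype ι] {X Y : ι → Ω → ℝ}
    (hX : ∀ i, MemLp (X i) 2 P) (hY : ∀ i, MemLp (Y i) 2 P) :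
    Var[fun ω => ∑ i, (X i ω + Y i ω); P] = ∑ i, ∑ j, cov[X i, X j; P]
      + ∑ i, ∑ j, cov[Y i, Y j; P] + 2 * ∑ i, ∑ j, cov[X i, Y j; P] := by
  have hsum :
      (fun ω => ∑ i, (X i ω + Y i ω)) = (fun ω => ∑ i, X i ω) + fun ω => ∑ i, Y i ω := by
    ext ω
    simp only [Pi.add_apply, Finset.sum_add_distrib]
  have hXs : MemLp (fun ω => ∑ i, X i ω) 2 P := memLp_finsetSum _ fun i _ => hX i
  have hYs : MemLp (fun ω => ∑ i, Y i ω) 2 P := memLp_finsetSum _ fun i _ => hY i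
  rw [hsum, ← covariance_self (hXs.add hYs).aemeasurable,
    covariance_add_left hXs hYs (hXs.add hYs),
    covariance_add_right hXs hXs hYs, covariance_add_right hYs hXs hYs,
    covariance_comm (fun ω => ∑ i, Y i ω), covariance_fun_sum_fun_sum hX hX,
    covariance_fun_sum_fun_sum hX hY, covariance_fun_sum_fun_sum hY hY]
  ring

end Covariance

section Shift

variable {Ω : Type*} [MeasurableSpace Ω] {P : Measure Ω} {G : Type*} [AddCommGroup G]
  {T : G → Ω → Ω} {X Y : G → Ω → ℝ}

lemma integral_eq_of_shift (hT : ∀ g, MeasurePreserving (T g) P P)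
    (hX : ∀ g h ω, X h (T g ω) = X (g + h) ω) (hXm : AEStronglyMeasurable (X 0) P) (g : G) :
    ∫ ω, X g ω ∂P = ∫ ω, X 0 ω ∂P := by
  have : X g = fun ω => X 0 (T g ω) := funext fun ω => by rw [hX, add_zero]
  rw [this, ← integral_map (hT g).aemeasurable ((hT g).map_eq.symm ▸ hXm), (hT g).map_eq]

lemma covariance_eq_of_shift (hT : ∀ g, MeasurePreserving (T g) P P)
    (hX : ∀ g h ω, X h (T g ω) = X (g + h) ω) (hY : ∀ g h ω, Y h (T g ω) = Y (g + h) ω)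
    (hXm : ∀ g, AEStronglyMeasurable (X g) P) (hYm : ∀ g, AEStronglyMeasurable (Y g) P)
    (i j : G) : cov[X i, Y j; P] = cov[X 0, Y (j - i); P] := by
  have hXi : X i = X 0 ∘ T i := funext fun ω => by rw [Function.comp_apply, hX, add_zero]
  have hYj : Y j = Y (j - i) ∘ T i :=
    funext fun ω => by rw [Function.comp_apply, hY, add_sub_cancel]
  rw [hXi, hYj, (hT i).covariance_comp (hXm 0) (hYm _)]

lemma sum_sum_covariance_of_shift [Fintype G] (hT : ∀ g, MeasurePreserving (T g) P P)
    (hX : ∀ g h ω, X h (T g ω) = X (g + h) ω) (hY : ∀ g h ω, Y h (T g ω) = Y (g + h) ω)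
    (hXm : ∀ g, AEStronglyMeasurable (X g) P) (hYm : ∀ g, AEStronglyMeasurable (Y g) P) :
    ∑ i, ∑ j, cov[X i, Y j; P] = Fintype.card G * ∑ j, cov[X 0, Y j; P] := by
  calc ∑ i, ∑ j, cov[X i, Y j; P] = ∑ i : G, ∑ j, cov[X 0, Y (j - i); P] :=
        Finset.sum_congr rfl fun i _ =>
          Finset.sum_congr rfl fun j _ => covariance_eq_of_shift hT hX hY hXm hYm i j
    _ = ∑ _i : G, ∑ j, cov[X 0, Y j; P] :=
        Finset.sum_congr rfl fun i _ => Fintype.sum_equiv (Equiv.subRight i) _ _ fun _ => rfl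
    _ = _ := by rw [Finset.sum_const, Finset.card_univ, nsmul_eq_mul]

end Shift

lemma measurePreserving_comp_equiv {ι E : Type*} [Fintype ι] [MeasurableSpace E] (μ : Measure E)
    [SigmaFinite μ] (e : ι ≃ ι) :
    MeasurePreserving (fun (ω : ι → E) => ω ∘ e)
      (Measure.pi fun _ => μ) (Measure.pi fun _ => μ) := by
  convert measurePreserving_arrowCongr' (fun _ => μ) (fun _ => μ) e.symm (MeasurableEquiv.refl E)
    fun _ => MeasurePreserving.id μ
  ext ω
  simp [MeasurableEquiv.arrowCongr', Equiv.arrowCongr', Equiv.arrowCongr]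

lemma covariance_pi_pair_eq_zero {ι E : Type*} [Fintype ι] [MeasurableSpace E]
    {μ : ι → Measure E} [∀ i, IsProbabilityMeasure (μ i)] {F G : E × E → ℝ}
    (hF : Measurable F) (hG : Measurable G) {a b a' b' : ι}
    (haa' : a ≠ a') (hab' : a ≠ b') (hba' : b ≠ a') (hbb' : b ≠ b')
    (hFm : MemLp (fun ω : ι → E => F (ω a, ω b)) 2 (Measure.pi μ))
    (hGm : MemLp (fun ω : ι → E => G (ω a', ω b')) 2 (Measure.pi μ)) :
    cov[fun ω => F (ω a, ω b), fun ω => G (ω a', ω b'); Measure.pi μ] = 0 :=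
  (((iIndepFun_pi (X := fun _ => id) fun _ => aemeasurable_id).indepFun_prodMk_prodMk
    (fun i => measurable_pi_apply i) a b a' b' haa' hab' hba' hbb').comp hF hG).covariance_eq_zero
    hFm hGm

namespace ZMod

def doubleHom (n : ℕ) : ZMod n →+ ZMod (2 * n) :=
  ZMod.lift n ⟨zmultiplesHom _ 2, by simpa [mul_comm] using ZMod.natCast_self (2 * n)⟩

lemma doubleHom_apply {n : ℕ} [NeZero n] (i : ZMod n) :
    doubleHom n i = 2 * (i.val : ZMod (2 * n)) := by
  conv_lhs => rw [← ZMod.natCast_zmod_val i, ← Int.cast_natCast]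
  rw [doubleHom, ZMod.lift_coe]
  simp [mul_comm]

lemma doubleHom_one (n : ℕ) : doubleHom n 1 = 2 := by
  rw [doubleHom, ← Int.cast_one, ZMod.lift_coe]
  simp

lemma doubleHom_injective (n : ℕ) [NeZero n] : Function.Injective (doubleHom n) := by
  refine (injective_iff_map_eq_zero _).2 fun i hi => ?_
  rw [doubleHom_apply] at hi
  replace hi : ((2 * i.val : ℕ) : ZMod (2 * n)) = 0 := by push_cast; exact hi
  rw [ZMod.natCast_eq_zero_iff] at hi
  exact (ZMod.val_eq_zero i).1 <| Nat.eq_zero_of_dvd_of_lt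
    (Nat.dvd_of_mul_dvd_mul_left two_pos hi) (ZMod.val_lt i)

lemma two_mul_ne_one {n : ℕ} (x : ZMod (2 * n)) : 2 * x ≠ 1 := by
  intro h
  have := congrArg (ZMod.castHom (dvd_mul_right 2 n) (ZMod 2)) h
  rw [map_mul, map_ofNat, map_one, show (2 : ZMod 2) = 0 from rfl, zero_mul] at this
  exact zero_ne_one this

lemma doubleHom_ne_add_one {n : ℕ} [NeZero n] (i j : ZMod n) :
    doubleHom n i ≠ doubleHom n j + 1 := by
  intro h
  apply two_mul_ne_one ((i - j).val : ZMod (2 * n))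
  rw [← doubleHom_apply, map_sub, h, add_sub_cancel_left]

end ZMod

open ZMod

section Bonds

variable {E : Type*} {n : ℕ}

def leftBond (f : E × E → ℝ) (i : ZMod n) (ω : ZMod (2 * n) → E) : ℝ :=
  f (ω (doubleHom n i - 1), ω (doubleHom n i))

def rightBond (g : E × E → ℝ) (i : ZMod n) (ω : ZMod (2 * n) → E) : ℝ :=
  g (ω (doubleHom n i), ω (doubleHom n i + 1))

lemma leftBond_shift (f : E × E → ℝ) (i j : ZMod n) (ω : ZMod (2 * n) → E) :
    leftBond f j (fun k => ω (k + doubleHom n i)) = leftBond f (i + j) ω := by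
  simp only [leftBond, map_add]
  ring_nf

lemma rightBond_shift (g : E × E → ℝ) (i j : ZMod n) (ω : ZMod (2 * n) → E) :
    rightBond g j (fun k => ω (k + doubleHom n i)) = rightBond g (i + j) ω := by
  simp only [rightBond, map_add]
  ring_nf

variable [NeZero n] [Finite E] [MeasurableSpace E] [MeasurableSingletonClass E]
  {μ : ZMod (2 * n) → Measure E} [∀ i, IsProbabilityMeasure (μ i)]

lemma covariance_leftBond_leftBond_eq_zero (f : E × E → ℝ) {i j : ZMod n} (hij : i ≠ j) :
    cov[leftBond f i, leftBond f j; Measure.pi μ] = 0 := by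
  have hinj := (doubleHom_injective n).ne hij
  refine covariance_pi_pair_eq_zero (measurable_of_countable f) (measurable_of_countable f)
    (by simpa using hinj) ?_ ?_ hinj MemLp.of_discrete MemLp.of_discrete
  · exact fun h => doubleHom_ne_add_one i j (sub_eq_iff_eq_add.1 h)
  · exact fun h => doubleHom_ne_add_one j i (sub_eq_iff_eq_add.1 h.symm)

lemma covariance_rightBond_rightBond_eq_zero (g : E × E → ℝ) {i j : ZMod n} (hij : i ≠ j) :
    cov[rightBond g i, rightBond g j; Measure.pi μ] = 0 := by
  have hinj := (doubleHom_injective n).ne hij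
  refine covariance_pi_pair_eq_zero (measurable_of_countable g) (measurable_of_countable g)
    hinj (doubleHom_ne_add_one i j) (fun h => doubleHom_ne_add_one j i h.symm)
    (by simpa using hinj) MemLp.of_discrete MemLp.of_discrete

lemma covariance_leftBond_rightBond_eq_zero (f g : E × E → ℝ) {i j : ZMod n} (hji : j ≠ i)
    (hji' : j ≠ i - 1) : cov[leftBond f i, rightBond g j; Measure.pi μ] = 0 := by
  refine covariance_pi_pair_eq_zero (measurable_of_countable f) (measurable_of_countable g)
    ?_ ?_ ((doubleHom_injective n).ne hji).symm (doubleHom_ne_add_one i j) MemLp.of_discrete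
    MemLp.of_discrete
  · exact fun h => doubleHom_ne_add_one i j (sub_eq_iff_eq_add.1 h)
  · intro h
    refine hji' (eq_sub_of_add_eq (doubleHom_injective n ?_))
    rw [map_add, doubleHom_one, sub_eq_iff_eq_add.1 h, add_assoc, one_add_one_eq_two]

lemma sum_covariance_leftBond_leftBond (f : E × E → ℝ) :
    ∑ j, cov[leftBond f 0, leftBond f j; Measure.pi μ] =
      cov[leftBond f 0, leftBond f 0; Measure.pi μ] :=
  Fintype.sum_eq_single 0 fun _ hj => covariance_leftBond_leftBond_eq_zero f (Ne.symm hj)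

lemma sum_covariance_rightBond_rightBond (g : E × E → ℝ) :
    ∑ j, cov[rightBond g 0, rightBond g j; Measure.pi μ] =
      cov[rightBond g 0, rightBond g 0; Measure.pi μ] :=
  Fintype.sum_eq_single 0 fun _ hj => covariance_rightBond_rightBond_eq_zero g (Ne.symm hj)

lemma sum_covariance_leftBond_rightBond [Nontrivial (ZMod n)] (f g : E × E → ℝ) :
    ∑ j, cov[leftBond f 0, rightBond g j; Measure.pi μ] =
      cov[leftBond f 0, rightBond g 0; Measure.pi μ] +
        cov[leftBond f 0, rightBond g (-1); Measure.pi μ] :=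
  Fintype.sum_eq_add 0 (-1) (neg_ne_zero.2 one_ne_zero).symm fun _ hj =>
    covariance_leftBond_rightBond_eq_zero f g hj.1 (by simpa using hj.2)

end Bonds

/-- **Variance of the stochastic generalized stacking fault energy of a supercell**
(Eqs. (4.11)-(4.16) of the paper).  For a cyclic supercell of `2 n` i.i.d. lattice sites
with bond energies `U i (ω) = f (ω (2i-1), ω (2i))` and `V i (ω) = g (ω (2i), ω (2i+1))`,
the variance of the supercell sum is
`Var (Σ_i (U i + V i)) = n (σ_uu + σ_vv + 2 σ_uv)`. -/
theorem variance_supercell_misfit_sum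
    {E : Type*} [Fintype E] [MeasurableSpace E] [MeasurableSingletonClass E]
    (μ : Measure E) [IsProbabilityMeasure μ]
    (n : ℕ) (hn : 2 ≤ n) (f g : E × E → ℝ) :
    letI : NeZero n := ⟨by omega⟩
    letI : NeZero (2 * n) := ⟨by omega⟩
    ∀ U V : ZMod n → (ZMod (2 * n) → E) → ℝ,
      (∀ i ω, U i ω = f (ω (2 * (i.val : ZMod (2 * n)) - 1), ω (2 * (i.val : ZMod (2 * n))))) →
      (∀ i ω, V i ω = g (ω (2 * (i.val : ZMod (2 * n))), ω (2 * (i.val : ZMod (2 * n)) + 1))) →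
      -- `P` is the product measure: the `2 n` lattice sites are i.i.d. with law `μ`
      let P : Measure (ZMod (2 * n) → E) := Measure.pi fun _ => μ
      let Ubar : ℝ := ∫ ω, U 0 ω ∂P
      let Vbar : ℝ := ∫ ω, V 0 ω ∂P
      let σuu : ℝ := ∫ ω, (U 0 ω - Ubar) ^ 2 ∂P
      let σvv : ℝ := ∫ ω, (V 0 ω - Vbar) ^ 2 ∂P
      let σuv : ℝ := ∫ ω, (U 0 ω - Ubar) * (V 0 ω + V (-1) ω - 2 * Vbar) ∂P
      variance (fun ω => ∑ i : ZMod n, (U i ω + V i ω)) P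
        = (n : ℝ) * (σuu + σvv + 2 * σuv) := by
  have : NeZero n := ⟨by omega⟩
  have : Fact (1 < n) := ⟨by omega⟩
  intro U V hU hV
  obtain rfl : U = leftBond f := funext₂ fun i ω => by rw [hU, leftBond, doubleHom_apply]
  obtain rfl : V = rightBond g := funext₂ fun i ω => by rw [hV, rightBond, doubleHom_apply]
  intro P Ubar Vbar σuu σvv σuv
  have hT i : MeasurePreserving (fun ω k => ω (k + doubleHom n i)) P P :=
    measurePreserving_comp_equiv μ (Equiv.addRight (doubleHom n i))
  have hm (X : ZMod n → (ZMod (2 * n) → E) → ℝ) i : AEStronglyMeasurable (X i) P :=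
    (MemLp.of_discrete (p := 2)).aestronglyMeasurable
  have hσuv : σuv = cov[leftBond f 0, rightBond g 0 + rightBond g (-1); P] := by
    simp only [σuv, Ubar, Vbar, covariance, Pi.add_apply, integral_add (Integrable.of_finite)
      (Integrable.of_finite), integral_eq_of_shift hT (rightBond_shift g) (hm _ 0) (-1)]
    congr 1 with ω
    ring
  rw [variance_sum_add (fun _ => MemLp.of_discrete) (fun _ => MemLp.of_discrete),
    sum_sum_covariance_of_shift hT (leftBond_shift f) (leftBond_shift f) (hm _) (hm _),
    sum_sum_covariance_of_shift hT (rightBond_shift g) (rightBond_shift g) (hm _) (hm _),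
    sum_sum_covariance_of_shift hT (leftBond_shift f) (rightBond_shift g) (hm _) (hm _),
    sum_covariance_leftBond_leftBond, sum_covariance_rightBond_rightBond,
    sum_covariance_leftBond_rightBond, hσuv,
    covariance_add_right MemLp.of_discrete MemLp.of_discrete MemLp.of_discrete, ZMod.card]
  simp only [σuu, σvv, covariance, sq]
  ring
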